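/- In a planar operad with multiplication in abelian groups, (⊕ₙ V(n), d, ·) is a differential graded associative algebra: d(x·y) = dx·y + (−1)^m x·dy for x ∈ V(m), y ∈ V(n), and moreover d(1) = μ = 1·1. -/

import Mathlib

/-- Transport an element of a graded family along an equality of indices. -/
def cst {V : ℕ → Type} {m n : ℕ} (h : m = n) (x : V m) : V n := h ▸ x

/-- Transport an element of a graded family of abelian groups along an
(alleged) equality of indices; it is the transport when the indices agree,
and `0` otherwise. -/
def tr {V : ℕ → Type} [∀ n, AddCommGroup (V n)] (m n : ℕ) (x : V m) : V n :=
  if h : m = n then h ▸ x else 0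

/-- The sign `(−1)^{(a−1)(b−1)}` (computed in `ℤ`, so that it is correct also
when `a = 0` or `b = 0`). -/
def jsgn (a b : ℕ) : ℤ := (-1) ^ ((((a : ℤ) - 1) * ((b : ℤ) - 1)).natAbs)

/-- A planar operad in the category of abelian groups: each `V(n)` is an
abelian group, the insertions `∘ᵢ : V(m) ⊗ V(n) → V(m+n-1)` are biadditive and
satisfy the standard pre-Lie system identities. -/
structure AddPlanarOperad (V : ℕ → Type) [∀ n, AddCommGroup (V n)] where
  one : V 1
  ins : ∀ {m n : ℕ}, V m → ℕ → V n → V (m + n - 1)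
  ins_add_left : ∀ {m n : ℕ} (x x' : V m) (j : ℕ) (y : V n),
    ins (x + x') j y = ins x j y + ins x' j y
  ins_add_right : ∀ {m n : ℕ} (x : V m) (j : ℕ) (y y' : V n),
    ins x j (y + y') = ins x j y + ins x j y'
  unit_left : ∀ {n : ℕ} (x : V n), ins one 0 x = cst (by omega) x
  unit_right : ∀ {n : ℕ} (x : V n) (j : ℕ) (hj : j < n), ins x j one = cst (by omega) x
  assoc_nested : ∀ {m n k : ℕ} (x : V m) (y : V n) (z : V k) (i j : ℕ)
    (hi : i < m) (hj : j < n),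
    ins (ins x i y) (i + j) z = cst (by omega) (ins x i (ins y j z))
  assoc_disjoint : ∀ {m n k : ℕ} (x : V m) (y : V n) (z : V k) (i j : ℕ)
    (hj : j < i) (hi : i < m),
    ins (ins x i y) j z = cst (by omega) (ins (ins x j z) (i + k - 1) y)

namespace AddPlanarOperad

variable {V : ℕ → Type} [∀ n, AddCommGroup (V n)] (P : AddPlanarOperad V)

/-- Gerstenhaber's circle product
`x ∘ y = Σ_{i=0}^{m-1} (−1)^{(n+1)i} x∘ᵢy` for `x ∈ V(m)`, `y ∈ V(n)`. -/
def circ {m n : ℕ} (x : V m) (y : V n) : V (m + n - 1) :=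
  ∑ i ∈ Finset.range m, ((-1 : ℤ) ^ ((n + 1) * i)) • P.ins x i y

/-- The bracket `[x, y] = x∘y − (−1)^{(m−1)(n−1)} y∘x`. -/
def gbr {m n : ℕ} (x : V m) (y : V n) : V (m + n - 1) :=
  P.circ x y - jsgn m n • cst (by omega) (P.circ y x)

end AddPlanarOperad

/-- An operad with multiplication in abelian groups. -/
structure AddOperadWithMult (V : ℕ → Type) [∀ n, AddCommGroup (V n)]
    extends AddPlanarOperad V where
  e : V 0
  mu : V 2
  mu_mu : ins mu 0 mu = ins mu 1 mu
  mu_e0 : ins mu 0 e = one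
  mu_e1 : ins mu 1 e = one

namespace AddOperadWithMult

variable {V : ℕ → Type} [∀ n, AddCommGroup (V n)] (P : AddOperadWithMult V)

/-- The cofaces `d⁰(x) = μ∘₁x`, `dⁱ(x) = x∘_{i-1}μ` for `1 ≤ i ≤ n`,
`d^{n+1}(x) = μ∘₀x` on `V(n)`. -/
def coface {n : ℕ} (i : ℕ) (x : V n) : V (n + 1) :=
  if i = 0 then cst (by omega) (P.ins P.mu 1 x)
  else if i = n + 1 then cst (by omega) (P.ins P.mu 0 x)
  else P.ins x (i - 1) P.mu

/-- The codegeneracies `sⁱ(x) = x∘ᵢe` on `V(n)`. -/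
def codeg {n : ℕ} (i : ℕ) (x : V n) : V (n - 1) := P.ins x i P.e

/-- The product `x·y := γ(μ; x, y)`. -/
def omul {m n : ℕ} (x : V m) (y : V n) : V (m + n) :=
  cst (by omega) (P.ins (cst (show 2 + n - 1 = n + 1 by omega) (P.ins P.mu 1 y)) 0 x)

/-- The distinguished elements `eₙ ∈ V(n)`, images of the associative operad. -/
def unitEl : ∀ n : ℕ, V n
  | 0 => P.e
  | 1 => P.one
  | n + 2 => cst (by omega) (P.ins P.mu 1 (unitEl (n + 1)))

/-- The differential `d = Σ_{i=0}^{n+1} (−1)ⁱ dⁱ`. -/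
def D {n : ℕ} (x : V n) : V (n + 1) :=
  ∑ i ∈ Finset.range (n + 2), ((-1 : ℤ) ^ i) • P.coface i x

/-- The degeneracy operator `s = Σ_{i=0}^{n-1} (−1)ⁱ sⁱ`. -/
def S {n : ℕ} (x : V n) : V (n - 1) :=
  ∑ i ∈ Finset.range n, ((-1 : ℤ) ^ i) • P.codeg i x

end AddOperadWithMult

section DGAHelpers

variable {V : ℕ → Type} [∀ n, AddCommGroup (V n)]

theorem cst_heq {m n : ℕ} (h : m = n) (x : V m) : HEq (cst (V := V) h x) x := by
  subst h; rfl

theorem cst_add' {m n : ℕ} (h : m = n) (x y : V m) :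
    cst (V := V) h (x + y) = cst h x + cst h y := by subst h; rfl

theorem cst_zsmul' {m n : ℕ} (h : m = n) (c : ℤ) (x : V m) :
    cst (V := V) h (c • x) = c • cst h x := by subst h; rfl

/-- `cst` as an additive monoid hom. -/
def cstHom {m n : ℕ} (h : m = n) : V m →+ V n := AddMonoidHom.mk' (cst h) (cst_add' h)

theorem cstHom_apply {m n : ℕ} (h : m = n) (x : V m) : cstHom (V := V) h x = cst h x := rfl

theorem heq_smul {m n : ℕ} (h : m = n) (c : ℤ) {x : V m} {y : V n} (hxy : HEq x y) :
    HEq (c • x) (c • y) := by subst h; rw [eq_of_heq hxy]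

namespace AddOperadWithMult

variable {P : AddOperadWithMult V}

theorem hnested {m n k : ℕ} (x : V m) (y : V n) (z : V k) (i j : ℕ)
    (hi : i < m) (hj : j < n) :
    HEq (P.ins (P.ins x i y) (i + j) z) (P.ins x i (P.ins y j z)) := by
  rw [P.assoc_nested x y z i j hi hj]; exact cst_heq _ _

theorem hdisjoint {m n k : ℕ} (x : V m) (y : V n) (z : V k) (i j : ℕ)
    (hj : j < i) (hi : i < m) :
    HEq (P.ins (P.ins x i y) j z) (P.ins (P.ins x j z) (i + k - 1) y) := by
  rw [P.assoc_disjoint x y z i j hj hi]; exact cst_heq _ _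

theorem hunit_left {n : ℕ} (x : V n) : HEq (P.ins P.one 0 x) x := by
  rw [P.unit_left x]; exact cst_heq _ _

theorem hunit_right {n : ℕ} (x : V n) (j : ℕ) (hj : j < n) : HEq (P.ins x j P.one) x := by
  rw [P.unit_right x j hj]; exact cst_heq _ _

end AddOperadWithMult

end DGAHelpers

namespace AddOperadWithMult

section Part2
variable {V : ℕ → Type} [∀ n, AddCommGroup (V n)] {P : AddOperadWithMult V}

/-- congruence for insertions, allowing different (but equal) positions -/
theorem hins {m m' n n' : ℕ} (hm : m = m') (hn : n = n') {j j' : ℕ} (hj : j = j')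
    {x : V m} {x' : V m'} {y : V n} {y' : V n'} (hx : HEq x x') (hy : HEq y y') :
    HEq (P.ins x j y) (P.ins x' j' y') := by
  subst hm; subst hn; subst hj; rw [eq_of_heq hx, eq_of_heq hy]

theorem coface_zero {n : ℕ} (x : V n) :
    P.coface 0 x = cst (by omega) (P.ins P.mu 1 x) := by
  unfold coface; rw [if_pos rfl]

theorem coface_top {n : ℕ} (x : V n) :
    P.coface (n + 1) x = cst (by omega) (P.ins P.mu 0 x) := by
  unfold coface
  rw [if_neg (by omega), if_pos rfl]

theorem coface_mid {n : ℕ} (i : ℕ) (x : V n) (h1 : i ≠ 0) (h2 : i ≠ n + 1) :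
    P.coface i x = P.ins x (i - 1) P.mu := by
  unfold coface; rw [if_neg h1, if_neg h2]

theorem coface_add {n : ℕ} (i : ℕ) (x y : V n) :
    P.coface i (x + y) = P.coface i x + P.coface i y := by
  unfold coface
  split_ifs <;> simp [cst_add', P.ins_add_right, P.ins_add_left]

/-- `coface` as an additive monoid hom. -/
def cofaceHom (P : AddOperadWithMult V) {n : ℕ} (i : ℕ) : V n →+ V (n + 1) :=
  AddMonoidHom.mk' (P.coface i) (coface_add i)

theorem coface_zsmul {n : ℕ} (i : ℕ) (c : ℤ) (x : V n) :
    P.coface i (c • x) = c • P.coface i x := map_zsmul (cofaceHom P i) c x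

theorem omul_add_left {m n : ℕ} (x x' : V m) (y : V n) :
    P.omul (x + x') y = P.omul x y + P.omul x' y := by
  unfold omul; rw [P.ins_add_right, cst_add']

theorem omul_add_right {m n : ℕ} (x : V m) (y y' : V n) :
    P.omul x (y + y') = P.omul x y + P.omul x y' := by
  unfold omul; rw [P.ins_add_right, cst_add', P.ins_add_left, cst_add']

/-- `omul` in the left variable as an additive monoid hom. -/
def omulLHom (P : AddOperadWithMult V) {m n : ℕ} (y : V n) : V m →+ V (m + n) :=
  AddMonoidHom.mk' (fun x => P.omul x y) (fun a b => omul_add_left a b y)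

/-- `omul` in the right variable as an additive monoid hom. -/
def omulRHom (P : AddOperadWithMult V) {m n : ℕ} (x : V m) : V n →+ V (m + n) :=
  AddMonoidHom.mk' (fun y => P.omul x y) (fun a b => omul_add_right x a b)

theorem omul_zsmul_left {m n : ℕ} (c : ℤ) (x : V m) (y : V n) :
    P.omul (c • x) y = c • P.omul x y := map_zsmul (omulLHom P y) c x

theorem omul_zsmul_right {m n : ℕ} (c : ℤ) (x : V m) (y : V n) :
    P.omul x (c • y) = c • P.omul x y := map_zsmul (omulRHom P x) c y

theorem D_one : P.D P.one = P.mu := by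
  have h0 : P.coface 0 P.one = P.mu := by
    rw [coface_zero]
    exact eq_of_heq ((cst_heq _ _).trans (hunit_right P.mu 1 (by omega)))
  have h1 : P.coface 1 P.one = P.mu := by
    rw [coface_mid 1 P.one (by omega) (by omega)]
    exact eq_of_heq (hunit_left P.mu)
  have h2 : P.coface 2 P.one = P.mu := by
    rw [show (2 : ℕ) = 1 + 1 from rfl, coface_top]
    exact eq_of_heq ((cst_heq _ _).trans (hunit_right P.mu 0 (by omega)))
  unfold D
  rw [Finset.sum_range_succ, Finset.sum_range_succ, Finset.sum_range_succ,
    Finset.sum_range_zero, h0, h1, h2]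
  norm_num

theorem omul_one_one : P.mu = P.omul P.one P.one := by
  refine (eq_of_heq ?_).symm
  unfold omul
  refine (cst_heq _ _).trans ?_
  refine (hins (by omega) rfl rfl (cst_heq _ _) HEq.rfl).trans ?_
  refine (hins (by omega) rfl rfl (hunit_right P.mu 1 (by omega)) HEq.rfl).trans ?_
  exact hunit_right P.mu 0 (by omega)

end Part2

end AddOperadWithMult

namespace AddOperadWithMult

section Part3
variable {V : ℕ → Type} [∀ n, AddCommGroup (V n)] {P : AddOperadWithMult V}

theorem homul_expand {m n : ℕ} (x : V m) (y : V n) :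
    HEq (P.omul x y) (P.ins (P.ins P.mu 1 y) 0 x) := by
  unfold omul; exact (cst_heq _ _).trans (hins (by omega) rfl rfl (cst_heq _ _) HEq.rfl)

theorem omul_assoc {m n k : ℕ} (x : V m) (y : V n) (z : V k) (h : m + (n + k) = m + n + k) :
    P.omul (P.omul x y) z = cst h (P.omul x (P.omul y z)) := by
  have l1 : HEq (P.omul (P.omul x y) z)
      (P.ins (P.ins P.mu 1 z) 0 (P.ins (P.ins P.mu 1 y) 0 x)) :=
    (homul_expand _ _).trans (hins rfl (by omega) rfl HEq.rfl (homul_expand x y))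
  have l2 : HEq (P.ins (P.ins P.mu 1 z) 0 (P.ins (P.ins P.mu 1 y) 0 x))
      (P.ins (P.ins (P.ins P.mu 1 z) 0 (P.ins P.mu 1 y)) 0 x) :=
    (hnested (P.ins P.mu 1 z) (P.ins P.mu 1 y) x 0 0 (by omega) (by omega)).symm
  have l3 : HEq (P.ins (P.ins P.mu 1 z) 0 (P.ins P.mu 1 y))
      (P.ins (P.ins (P.ins P.mu 0 P.mu) 1 y) (n + 1) z) := by
    refine (hdisjoint P.mu z (P.ins P.mu 1 y) 1 0 (by omega) (by omega)).trans ?_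
    exact hins (by omega) rfl (by omega)
      ((hnested P.mu P.mu y 0 1 (by omega) (by omega)).symm) HEq.rfl
  have l4 : HEq (P.omul (P.omul x y) z)
      (P.ins (P.ins (P.ins (P.ins P.mu 0 P.mu) 1 y) (n + 1) z) 0 x) :=
    l1.trans (l2.trans (hins (by omega) rfl rfl l3 HEq.rfl))
  have r1 : HEq (P.omul x (P.omul y z))
      (P.ins (P.ins P.mu 1 (P.ins (P.ins P.mu 1 z) 0 y)) 0 x) :=
    (homul_expand _ _).trans
      (hins (by omega) rfl rfl (hins rfl (by omega) rfl HEq.rfl (homul_expand y z)) HEq.rfl)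
  have r2 : HEq (P.ins P.mu 1 (P.ins (P.ins P.mu 1 z) 0 y))
      (P.ins (P.ins (P.ins P.mu 1 P.mu) 1 y) (n + 1) z) :=
    (hins rfl (by omega) rfl HEq.rfl (hdisjoint P.mu z y 1 0 (by omega) (by omega))).trans
      ((hnested P.mu (P.ins P.mu 0 y) z 1 (1 + n - 1) (by omega) (by omega)).symm.trans
        (hins (by omega) rfl (by omega)
          ((hnested P.mu P.mu y 1 0 (by omega) (by omega)).symm) HEq.rfl))
  have r3 : HEq (cst h (P.omul x (P.omul y z)))
      (P.ins (P.ins (P.ins (P.ins P.mu 1 P.mu) 1 y) (n + 1) z) 0 x) :=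
    (cst_heq _ _).trans (r1.trans (hins (by omega) rfl rfl r2 HEq.rfl))
  have mm : (P.ins (P.ins (P.ins (P.ins P.mu 0 P.mu) 1 y) (n + 1) z) 0 x)
      = (P.ins (P.ins (P.ins (P.ins P.mu 1 P.mu) 1 y) (n + 1) z) 0 x) := by rw [P.mu_mu]
  exact eq_of_heq (l4.trans ((heq_of_eq mm).trans r3.symm))

end Part3

end AddOperadWithMult

namespace AddOperadWithMult

section Part4
variable {V : ℕ → Type} [∀ n, AddCommGroup (V n)] {P : AddOperadWithMult V}

theorem coface_top' {n i : ℕ} (h : i = n + 1) (x : V n) :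
    P.coface i x = cst (by omega) (P.ins P.mu 0 x) := by
  subst h; exact coface_top x

theorem coface_coface {n : ℕ} (x : V n) {i j : ℕ} (hij : i < j) (hi : i ≤ n + 1)
    (hj : j ≤ n + 2) :
    P.coface j (P.coface i x) = P.coface i (P.coface (j - 1) x) := by
  by_cases hi0 : i = 0
  · subst hi0
    rw [coface_zero]
    by_cases hj1 : j = 1
    · subst hj1
      rw [coface_mid 1 _ (by omega) (by omega),
        show (1:ℕ) - 1 = 0 from rfl, coface_zero, coface_zero]
      apply eq_of_heq
      refine (hins (by omega) rfl rfl (cst_heq _ _) HEq.rfl).trans ?_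
      refine (hdisjoint P.mu x P.mu 1 0 (by omega) (by omega)).trans ?_
      have mm : P.ins (P.ins P.mu 0 P.mu) (1 + 2 - 1) x
          = P.ins (P.ins P.mu 1 P.mu) (1 + 2 - 1) x := by rw [P.mu_mu]
      refine (heq_of_eq mm).trans ?_
      refine (hnested P.mu P.mu x 1 1 (by omega) (by omega)).trans ?_
      exact (hins rfl (by omega) rfl HEq.rfl (cst_heq _ _).symm).trans (cst_heq _ _).symm
    · by_cases hjtop : j = n + 2
      · subst hjtop
        rw [coface_top' (show (n:ℕ) + 2 = (n+1) + 1 by omega),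
          coface_top' (show (n:ℕ) + 2 - 1 = n + 1 by omega) x, coface_zero]
        apply eq_of_heq
        refine (cst_heq _ _).trans ?_
        refine (hins rfl (by omega) rfl HEq.rfl (cst_heq _ _)).trans ?_
        refine ((hnested P.mu P.mu x 0 1 (by omega) (by omega)).symm).trans ?_
        have mm : P.ins (P.ins P.mu 0 P.mu) (0 + 1) x
            = P.ins (P.ins P.mu 1 P.mu) (0 + 1) x := by rw [P.mu_mu]
        refine (heq_of_eq mm).trans ?_
        refine (hnested P.mu P.mu x 1 0 (by omega) (by omega)).trans ?_
        exact (hins rfl (by omega) rfl HEq.rfl (cst_heq _ _).symm).trans (cst_heq _ _).symm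
      · rw [coface_mid j _ (by omega) (by omega),
          coface_mid (j-1) x (by omega) (by omega), coface_zero]
        apply eq_of_heq
        refine (hins (by omega) rfl (show j - 1 = 1 + (j - 1 - 1) by omega)
          (cst_heq _ _) HEq.rfl).trans ?_
        refine (hnested P.mu x P.mu 1 (j-1-1) (by omega) (by omega)).trans ?_
        exact (cst_heq _ _).symm
  · by_cases hitop : i = n + 1
    · have hj2 : j = n + 2 := by omega
      subst hitop hj2
      rw [coface_top x, coface_top' (show (n:ℕ) + 2 = (n+1) + 1 by omega),
        coface_top' (show (n:ℕ) + 2 - 1 = n + 1 by omega) x,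
        coface_mid (n+1) _ (by omega) (by omega)]
      apply eq_of_heq
      refine (cst_heq _ _).trans ?_
      refine (hins rfl (by omega) rfl HEq.rfl (cst_heq _ _)).trans ?_
      refine ((hnested P.mu P.mu x 0 0 (by omega) (by omega)).symm).trans ?_
      have mm : P.ins (P.ins P.mu 0 P.mu) (0 + 0) x
          = P.ins (P.ins P.mu 1 P.mu) (0 + 0) x := by rw [P.mu_mu]
      refine (heq_of_eq mm).trans ?_
      refine HEq.trans (b := P.ins (P.ins P.mu 0 x) (1 + n - 1) P.mu) ?_ ?_
      · exact hdisjoint P.mu P.mu x 1 0 (by omega) (by omega)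
      · exact hins (by omega) rfl (by omega) (cst_heq _ _).symm HEq.rfl
    · rw [coface_mid i x (by omega) (by omega)]
      by_cases hjtop : j = n + 2
      · subst hjtop
        rw [coface_top' (show (n:ℕ) + 2 = (n+1) + 1 by omega),
          coface_top' (show (n:ℕ) + 2 - 1 = n + 1 by omega) x,
          coface_mid i _ (by omega) (by omega)]
        apply eq_of_heq
        refine (cst_heq _ _).trans ?_
        refine ((hnested P.mu x P.mu 0 (i-1) (by omega) (by omega)).symm).trans ?_
        exact hins (by omega) rfl (by omega) (cst_heq _ _).symm HEq.rfl
      · rw [coface_mid j _ (by omega) (by omega),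
          coface_mid (j-1) x (by omega) (by omega),
          coface_mid i _ (by omega) (by omega)]
        apply eq_of_heq
        by_cases hj1 : j = i + 1
        · subst hj1
          refine (hins rfl rfl (show i + 1 - 1 = (i-1) + 1 by omega)
            HEq.rfl HEq.rfl).trans ?_
          refine (hnested x P.mu P.mu (i-1) 1 (by omega) (by omega)).trans ?_
          have mm : P.ins x (i-1) (P.ins P.mu 1 P.mu)
              = P.ins x (i-1) (P.ins P.mu 0 P.mu) := by rw [P.mu_mu]
          refine (heq_of_eq mm).trans ?_
          refine ((hnested x P.mu P.mu (i-1) 0 (by omega) (by omega)).symm).trans ?_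
          refine hins rfl rfl (by omega) ?_ HEq.rfl
          exact hins rfl rfl (by omega) HEq.rfl HEq.rfl
        · refine (hins rfl rfl (show j - 1 = (j-2) + 2 - 1 by omega)
            HEq.rfl HEq.rfl).trans ?_
          refine ((hdisjoint x P.mu P.mu (j-2) (i-1) (by omega) (by omega)).symm).trans ?_
          refine hins (by omega) rfl rfl ?_ HEq.rfl
          exact hins rfl rfl (by omega) HEq.rfl HEq.rfl

end Part4

end AddOperadWithMult

namespace AddOperadWithMult

section Part5
variable {V : ℕ → Type} [∀ n, AddCommGroup (V n)] {P : AddOperadWithMult V}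

theorem coface_omul_left {m n : ℕ} (x : V m) (y : V n) (i : ℕ) (hi : i ≤ m) :
    P.coface i (P.omul x y) = cst (by omega) (P.omul (P.coface i x) y) := by
  apply eq_of_heq
  by_cases hi0 : i = 0
  · subst hi0
    rw [coface_zero, coface_zero]
    refine (cst_heq _ _).trans ?_
    refine (hins rfl (by omega) rfl HEq.rfl (homul_expand x y)).trans ?_
    refine ((hnested P.mu (P.ins P.mu 1 y) x 1 0 (by omega) (by omega)).symm).trans ?_
    refine (hins (by omega) rfl rfl
      ((hnested P.mu P.mu y 1 1 (by omega) (by omega)).symm) HEq.rfl).trans ?_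
    -- now at ins (ins (ins μ 1 μ) (1+1) y) (1+0) x
    have mm : P.ins (P.ins (P.ins P.mu 1 P.mu) (1+1) y) (1+0) x
        = P.ins (P.ins (P.ins P.mu 0 P.mu) (1+1) y) (1+0) x := by rw [P.mu_mu]
    refine (heq_of_eq mm).trans ?_
    refine (hins (by omega) rfl rfl
      ((hdisjoint P.mu y P.mu 1 0 (by omega) (by omega)).symm) HEq.rfl).trans ?_
    -- now at ins (ins (ins μ 1 y) 0 μ) (1+0) x
    refine (hnested (P.ins P.mu 1 y) P.mu x 0 1 (by omega) (by omega)).trans ?_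
    -- now at ins (ins μ 1 y) 0 (ins μ 1 x)
    refine HEq.trans ?_ (cst_heq _ _).symm
    refine HEq.trans ?_ (homul_expand (P.coface 0 x) y).symm
    rw [coface_zero]
    exact hins rfl (by omega) rfl HEq.rfl (cst_heq _ _).symm
  · rw [coface_mid i _ (by omega) (by omega), coface_mid i x (by omega) (by omega)]
    refine (hins (by omega) rfl (show i - 1 = 0 + (i-1) by omega)
      (homul_expand x y) HEq.rfl).trans ?_
    refine (hnested (P.ins P.mu 1 y) x P.mu 0 (i-1) (by omega) (by omega)).trans ?_
    refine HEq.trans ?_ (cst_heq _ _).symm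
    exact (homul_expand (P.ins x (i-1) P.mu) y).symm

theorem coface_omul_right {m n : ℕ} (x : V m) (y : V n) (j : ℕ) (h1 : 1 ≤ j)
    (hj : j ≤ n + 1) :
    P.coface (m + j) (P.omul x y) = P.omul x (P.coface j y) := by
  apply eq_of_heq
  by_cases hjtop : j = n + 1
  · subst hjtop
    rw [coface_top' (show m + (n + 1) = (m + n) + 1 by omega), coface_top y]
    refine (cst_heq _ _).trans ?_
    refine (hins rfl (by omega) rfl HEq.rfl (homul_expand x y)).trans ?_
    refine ((hnested P.mu (P.ins P.mu 1 y) x 0 0 (by omega) (by omega)).symm).trans ?_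
    refine (hins (by omega) rfl rfl
      ((hnested P.mu P.mu y 0 1 (by omega) (by omega)).symm) HEq.rfl).trans ?_
    -- at ins (ins (ins μ 0 μ) (0+1) y) (0+0) x
    have mm : P.ins (P.ins (P.ins P.mu 0 P.mu) (0+1) y) (0+0) x
        = P.ins (P.ins (P.ins P.mu 1 P.mu) (0+1) y) (0+0) x := by rw [P.mu_mu]
    refine (heq_of_eq mm).trans ?_
    refine (hins (by omega) rfl rfl
      (hnested P.mu P.mu y 1 0 (by omega) (by omega)) HEq.rfl).trans ?_
    -- at ins (ins μ 1 (ins μ 0 y)) (0+0) x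
    refine HEq.trans ?_ (homul_expand x (cst (by omega) (P.ins P.mu 0 y))).symm
    exact hins (by omega) rfl rfl
      (hins rfl (by omega) rfl HEq.rfl (cst_heq _ _).symm) HEq.rfl
  · rw [coface_mid (m + j) _ (by omega) (by omega), coface_mid j y (by omega) (by omega)]
    refine (hins (by omega) rfl (show m + j - 1 = j + m - 1 by omega)
      (homul_expand x y) HEq.rfl).trans ?_
    refine ((hdisjoint (P.ins P.mu 1 y) P.mu x j 0 (by omega) (by omega)).symm).trans ?_
    -- at ins (ins (ins μ 1 y) j μ) 0 x
    refine (hins (by omega) rfl rfl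
      ((hins rfl rfl (show j = 1 + (j - 1) by omega) HEq.rfl HEq.rfl).trans
        (hnested P.mu y P.mu 1 (j-1) (by omega) (by omega))) HEq.rfl).trans ?_
    -- at ins (ins μ 1 (ins y (j-1) μ)) 0 x
    exact (homul_expand x (P.ins y (j-1) P.mu)).symm

theorem coface_omul_cross {m n : ℕ} (x : V m) (y : V n) :
    cst (by rw [Nat.add_assoc, Nat.add_comm 1 n]) (P.omul (P.coface (m + 1) x) y) = P.omul x (P.coface 0 y) := by
  apply eq_of_heq
  rw [coface_top' (rfl : m + 1 = m + 1), coface_zero]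
  refine (cst_heq _ _).trans ?_
  refine (homul_expand _ y).trans ?_
  refine (hins rfl (by omega) rfl HEq.rfl (cst_heq _ _)).trans ?_
  -- at ins (ins μ 1 y) 0 (ins μ 0 x)
  refine ((hnested (P.ins P.mu 1 y) P.mu x 0 0 (by omega) (by omega)).symm).trans ?_
  -- at ins (ins (ins μ 1 y) 0 μ) (0+0) x
  refine (hins (by omega) rfl rfl
    (hdisjoint P.mu y P.mu 1 0 (by omega) (by omega)) HEq.rfl).trans ?_
  -- at ins (ins (ins μ 0 μ) (1+2-1) y) (0+0) x
  have mm : P.ins (P.ins (P.ins P.mu 0 P.mu) (1+2-1) y) (0+0) x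
      = P.ins (P.ins (P.ins P.mu 1 P.mu) (1+2-1) y) (0+0) x := by rw [P.mu_mu]
  refine (heq_of_eq mm).trans ?_
  refine (hins (by omega) rfl rfl
    (hnested P.mu P.mu y 1 1 (by omega) (by omega)) HEq.rfl).trans ?_
  -- at ins (ins μ 1 (ins μ 1 y)) 0 x
  refine HEq.trans ?_ (homul_expand x (cst (by omega) (P.ins P.mu 1 y))).symm
  exact hins (by omega) rfl rfl
    (hins rfl (by omega) rfl HEq.rfl (cst_heq _ _).symm) HEq.rfl

end Part5

end AddOperadWithMult

namespace AddOperadWithMult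

section Part6
variable {V : ℕ → Type} [∀ n, AddCommGroup (V n)] {P : AddOperadWithMult V}

theorem cofaceHom_apply {n : ℕ} (i : ℕ) (x : V n) : cofaceHom P i x = P.coface i x := rfl

theorem D_D {n : ℕ} (x : V n) : P.D (P.D x) = 0 := by
  have step : P.D (P.D x) = ∑ p ∈ Finset.range (n+1+2) ×ˢ Finset.range (n+2),
      (((-1:ℤ)^p.1 * (-1:ℤ)^p.2) • P.coface p.1 (P.coface p.2 x)) := by
    rw [Finset.sum_product]
    unfold D
    refine Finset.sum_congr rfl fun j _ => ?_
    rw [show P.coface j (∑ i ∈ Finset.range (n+2), ((-1:ℤ)^i) • P.coface i x)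
        = cofaceHom P j (∑ i ∈ Finset.range (n+2), ((-1:ℤ)^i) • P.coface i x) from rfl,
      map_sum, Finset.smul_sum]
    refine Finset.sum_congr rfl fun i _ => ?_
    rw [map_zsmul, smul_smul]
    rfl
  rw [step]
  refine Finset.sum_involution
    (fun p _ => if p.2 < p.1 then (p.2, p.1 - 1) else (p.2 + 1, p.1)) ?_ ?_ ?_ ?_
  · rintro ⟨j, i⟩ hp
    simp only [Finset.mem_product, Finset.mem_range] at hp
    by_cases h : i < j
    · simp only [if_pos h]
      obtain ⟨j', rfl⟩ : ∃ j', j = j' + 1 := ⟨j - 1, by omega⟩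
      have hc := coface_coface (P := P) x (i := i) (j := j' + 1) h (by omega) (by omega)
      simp only [Nat.add_sub_cancel] at hc ⊢
      rw [hc, ← add_smul,
        show (-1:ℤ)^(j'+1) * (-1:ℤ)^i + (-1:ℤ)^i * (-1:ℤ)^j' = 0 by rw [pow_succ]; ring,
        zero_smul]
    · simp only [if_neg h]
      have hc := coface_coface (P := P) x (i := j) (j := i + 1) (by omega) (by omega)
        (by omega)
      simp only [Nat.add_sub_cancel] at hc
      rw [hc, ← add_smul,
        show (-1:ℤ)^j * (-1:ℤ)^i + (-1:ℤ)^(i+1) * (-1:ℤ)^j = 0 by rw [pow_succ]; ring,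
        zero_smul]
  · rintro ⟨j, i⟩ hp _
    dsimp only
    split_ifs with h <;> simp only [Prod.mk.injEq, ne_eq, not_and] <;> intro h1 <;> omega
  · rintro ⟨j, i⟩ hp
    simp only [Finset.mem_product, Finset.mem_range] at hp ⊢
    split_ifs with h <;> constructor <;> omega
  · rintro ⟨j, i⟩ hp
    dsimp only
    by_cases h : i < j
    · rw [if_pos h, if_neg (by dsimp only; omega)]
      dsimp only
      rw [Prod.mk.injEq]
      constructor <;> omega
    · rw [if_neg h, if_pos (by dsimp only; omega)]
      dsimp only
      rw [Prod.mk.injEq]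
      constructor <;> omega

theorem leibniz {m n : ℕ} (x : V m) (y : V n) (h : m + 1 + n = m + (n + 1)) :
    P.D (P.omul x y) = cst h (P.omul (P.D x) y) + ((-1:ℤ)^m) • P.omul x (P.D y) := by
  have hL : P.D (P.omul x y)
      = (∑ i ∈ Finset.range (m+1), ((-1:ℤ)^i) • P.coface i (P.omul x y))
        + ∑ j ∈ Finset.range (n+1), ((-1:ℤ)^(m+1+j)) • P.coface (m+1+j) (P.omul x y) := by
    unfold D
    rw [show m + n + 2 = (m+1) + (n+1) by omega, Finset.sum_range_add]
  have rhs1 : cst h (P.omul (P.D x) y)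
      = ∑ i ∈ Finset.range (m+2), ((-1:ℤ)^i) • cst h (P.omul (P.coface i x) y) := by
    rw [show cst h (P.omul (P.D x) y) = ((cstHom h).comp (omulLHom P y)) (P.D x) from rfl]
    unfold D
    rw [map_sum]
    exact Finset.sum_congr rfl fun i _ => by rw [map_zsmul]; rfl
  have hR2 : ((-1:ℤ)^m) • P.omul x (P.D y)
      = ∑ j ∈ Finset.range (n+2), ((-1:ℤ)^m * (-1:ℤ)^j) • P.omul x (P.coface j y) := by
    rw [show P.omul x (P.D y) = (omulRHom P x) (P.D y) from rfl]
    unfold D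
    rw [map_sum, Finset.smul_sum]
    exact Finset.sum_congr rfl fun j _ => by rw [map_zsmul, smul_smul]; rfl
  have e1 : (∑ i ∈ Finset.range (m+1), ((-1:ℤ)^i) • P.coface i (P.omul x y))
      = ∑ i ∈ Finset.range (m+1), ((-1:ℤ)^i) • cst h (P.omul (P.coface i x) y) :=
    Finset.sum_congr rfl fun i hi => by
      rw [coface_omul_left x y i (Nat.lt_succ_iff.mp (Finset.mem_range.mp hi))]
  have e2 : (∑ j ∈ Finset.range (n+1), ((-1:ℤ)^(m+1+j)) • P.coface (m+1+j) (P.omul x y))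
      = ∑ j ∈ Finset.range (n+1), ((-1:ℤ)^m * (-1:ℤ)^(j+1)) • P.omul x (P.coface (j+1) y) :=
    Finset.sum_congr rfl fun j hj => by
      rw [show m+1+j = m + (j+1) by omega,
        coface_omul_right x y (j+1) (by omega) (by have := Finset.mem_range.mp hj; omega),
        pow_add]
  have e3 : ((-1:ℤ)^(m+1)) • cst h (P.omul (P.coface (m+1) x) y)
      + ((-1:ℤ)^m * (-1:ℤ)^0) • P.omul x (P.coface 0 y) = 0 := by
    rw [← coface_omul_cross x y, ← add_smul,
      show (-1:ℤ)^(m+1) + (-1:ℤ)^m * (-1:ℤ)^0 = 0 by rw [pow_succ]; ring, zero_smul]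
  rw [hL, rhs1, hR2, Finset.sum_range_succ
    (fun i => ((-1:ℤ)^i) • cst h (P.omul (P.coface i x) y)) (m+1), Finset.sum_range_succ'
    (fun j => ((-1:ℤ)^m * (-1:ℤ)^j) • P.omul x (P.coface j y)) (n+1),
    e1, e2, add_add_add_comm, e3, add_zero]

end Part6

end AddOperadWithMult

/-- `(⊕ₙ V(n), d, ·)` is a differential graded associative
algebra: `d² = 0`, `·` is associative, the Leibniz rule
`d(x·y) = dx·y + (−1)^m x·dy` holds, and `d(1) = μ = 1·1`. -/
theorem dga_structure (V : ℕ → Type) [∀ n, AddCommGroup (V n)]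
    (P : AddOperadWithMult V) :
    (∀ (n : ℕ) (x : V n), P.D (P.D x) = 0) ∧
    (∀ (m n k : ℕ) (x : V m) (y : V n) (z : V k),
      P.omul (P.omul x y) z = cst (by omega) (P.omul x (P.omul y z))) ∧
    (∀ (m n : ℕ) (x : V m) (y : V n),
      P.D (P.omul x y) =
        cst (by omega) (P.omul (P.D x) y) + ((-1 : ℤ) ^ m) • P.omul x (P.D y)) ∧
    (P.D P.one = P.mu) ∧ (P.mu = P.omul P.one P.one) :=
  ⟨fun _ x => AddOperadWithMult.D_D x,
   fun _ _ _ x y z => AddOperadWithMult.omul_assoc x y z _,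
   fun _ _ x y => AddOperadWithMult.leibniz x y _,
   AddOperadWithMult.D_one, AddOperadWithMult.omul_one_one⟩
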